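/- (T.Mizrova) Let (ord, b⁰, b¹) and (ord′, c⁰, c¹) be two normalized boundary data of the same order n, let q := ⌊n/2⌋, and let D := (1/(2π)) · diag(ε_0, …, ε_{q−1}, −ε_q, …, −ε_{n−1}). Assume both matrices 𝚯_q(b⁰,b¹) and 𝚯_q(c⁰,c¹) are invertible (Birkhoff-regularity). If 𝚯_q(b⁰,b¹)^{−1} · 𝚯_q(b¹,b⁰) · D = 𝚯_q(c⁰,c¹)^{−1} · 𝚯_q(c¹,c⁰) · D, then the two data define the same essential boundary conditions: for every j ∈ {0,…,n−1} the fibers {m : ord(m) = j} and {m : ord′(m) = j} have the same cardinality, and span{(b⁰_m, b¹_m) : ord(m) = j} = span{(c⁰_m, c¹_m) : ord′(m) = j} as subspaces of ℂ². -/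
import Mathlib

open Matrix
open scoped Classical

noncomputable section

/-- `ε_k = exp(2πik/n)`. -/
def eps (n : ℕ) (k : Fin n) : ℂ := Complex.exp (2 * Real.pi * Complex.I * k / n)

/-- The vector `B_k^i` with `m`-th entry `b_m · ε_k^{ord m}`. -/
def Bvec (n : ℕ) (ord : Fin n → Fin n) (b : Fin n → ℂ) (k : Fin n) : Fin n → ℂ :=
  fun m => b m * eps n k ^ (ord m : ℕ)

/-- The matrix `𝚯_p(b⁰,b¹)` whose `k`-th column is `B_k^0` for `k < p` and `B_k^1` for `k ≥ p`. -/
def ThetaMat (n : ℕ) (ord : Fin n → Fin n) (b0 b1 : Fin n → ℂ) (p : ℕ) :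
    Matrix (Fin n) (Fin n) ℂ :=
  fun m k => if (k : ℕ) < p then Bvec n ord b0 k m else Bvec n ord b1 k m

/-- Normalized boundary data: every fiber of `ord` has at most two elements and the
corresponding vectors `(b⁰_m, b¹_m) ∈ ℂ²` are linearly independent over each fiber. -/
def NormalizedBC (n : ℕ) (ord : Fin n → Fin n) (b0 b1 : Fin n → ℂ) : Prop :=
  ∀ j : Fin n,
    (Finset.univ.filter (fun m => ord m = j)).card ≤ 2 ∧
    LinearIndependent ℂ (fun m : {m : Fin n // ord m = j} => ![b0 m.1, b1 m.1])

/-- The diagonal matrix `D = diag(ε_0,…,ε_{q-1},-ε_q,…,-ε_{n-1})/(2π)`. -/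
def Dmat (n q : ℕ) : Matrix (Fin n) (Fin n) ℂ :=
  Matrix.diagonal (fun k => (if (k : ℕ) < q then eps n k else -eps n k) / (2 * Real.pi))

lemma eps_ne_zero (n : ℕ) (k : Fin n) : eps n k ≠ 0 := Complex.exp_ne_zero _

lemma eps_injective (n : ℕ) (hn : 0 < n) : Function.Injective (eps n) := by
  have hprim := Complex.isPrimitiveRoot_exp n hn.ne'
  intro k k' h
  have hk : ∀ l : Fin n, eps n l = Complex.exp (2 * Real.pi * Complex.I / n) ^ (l : ℕ) := by
    intro l
    rw [← Complex.exp_nat_mul]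
    unfold eps
    congr 1
    ring
  rw [hk k, hk k'] at h
  exact Fin.ext (hprim.pow_inj k.isLt k'.isLt h)

/-- Fourier inversion step. -/
lemma fourier_coeff (n : ℕ) (hn : 0 < n) (ord : Fin n → Fin n) (b : Fin n → ℂ)
    (r : Fin n) (c : ℂ) (A : Fin n → ℂ)
    (h : ∀ k : Fin n, ∑ m, A m * (b m * eps n k ^ (ord m : ℕ)) = c * eps n k ^ (r : ℕ)) :
    ∀ j : Fin n, ∑ m ∈ Finset.univ.filter (fun m => ord m = j), A m * b m
      = if r = j then c else 0 := by
  set u : Fin n → ℂ := fun j =>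
    (∑ m ∈ Finset.univ.filter (fun m => ord m = j), A m * b m) - (if r = j then c else 0) with hu
  have hmv : (Matrix.vandermonde (eps n)).mulVec u = 0 := by
    funext k
    have h1 : ∑ j : Fin n, eps n k ^ (j : ℕ) *
        (∑ m ∈ Finset.univ.filter (fun m => ord m = j), A m * b m)
        = ∑ m, A m * (b m * eps n k ^ (ord m : ℕ)) := by
      rw [← Finset.sum_fiberwise Finset.univ ord (fun m => A m * (b m * eps n k ^ (ord m : ℕ)))]
      refine Finset.sum_congr rfl fun j _ => ?_
      rw [Finset.mul_sum]
      refine Finset.sum_congr rfl fun m hm => ?_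
      rw [Finset.mem_filter] at hm
      rw [hm.2]; ring
    have h2 : ∑ j : Fin n, eps n k ^ (j : ℕ) * (if r = j then c else 0)
        = c * eps n k ^ (r : ℕ) := by
      simp only [mul_ite, mul_zero, Finset.sum_ite_eq, Finset.mem_univ, if_pos]
      ring
    simp only [Matrix.mulVec, dotProduct, Matrix.vandermonde, Pi.zero_apply, hu]
    simp only [Matrix.of_apply, mul_sub]
    rw [Finset.sum_sub_distrib, h1, h2, h k, sub_self]
  have hdet : (Matrix.vandermonde (eps n)).det ≠ 0 :=
    Matrix.det_vandermonde_ne_zero_iff.mpr (eps_injective n hn)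
  have hu0 := Matrix.eq_zero_of_mulVec_eq_zero hdet hmv
  intro j
  have := congrFun hu0 j
  simp only [hu, Pi.zero_apply, sub_eq_zero] at this
  exact this

/-- Key span inclusion. -/
lemma key_span_le (n : ℕ) (hn : 0 < n) (ord ord' : Fin n → Fin n)
    (b0 b1 c0 c1 : Fin n → ℂ) (A : Matrix (Fin n) (Fin n) ℂ)
    (hA0 : A * ThetaMat n ord b0 b1 (n / 2) = ThetaMat n ord' c0 c1 (n / 2))
    (hA1 : A * ThetaMat n ord b1 b0 (n / 2) = ThetaMat n ord' c1 c0 (n / 2)) (j : Fin n) :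
    Submodule.span ℂ ((fun m => ![c0 m, c1 m]) '' {m : Fin n | ord' m = j}) ≤
      Submodule.span ℂ ((fun m => ![b0 m, b1 m]) '' {m : Fin n | ord m = j}) := by
  have hvec0 : ∀ (l k : Fin n),
      ∑ m, A l m * (b0 m * eps n k ^ (ord m : ℕ)) = c0 l * eps n k ^ (ord' l : ℕ) := by
    intro l k
    by_cases hk : (k : ℕ) < n / 2
    · have := congrFun (congrFun hA0 l) k
      simpa [Matrix.mul_apply, ThetaMat, Bvec, hk] using this
    · have := congrFun (congrFun hA1 l) k
      simpa [Matrix.mul_apply, ThetaMat, Bvec, hk] using this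
  have hvec1 : ∀ (l k : Fin n),
      ∑ m, A l m * (b1 m * eps n k ^ (ord m : ℕ)) = c1 l * eps n k ^ (ord' l : ℕ) := by
    intro l k
    by_cases hk : (k : ℕ) < n / 2
    · have := congrFun (congrFun hA1 l) k
      simpa [Matrix.mul_apply, ThetaMat, Bvec, hk] using this
    · have := congrFun (congrFun hA0 l) k
      simpa [Matrix.mul_apply, ThetaMat, Bvec, hk] using this
  rw [Submodule.span_le]
  rintro x ⟨l, hl, rfl⟩
  replace hl : ord' l = j := hl
  have hc0 := fourier_coeff n hn ord b0 (ord' l) (c0 l) (A l) (hvec0 l) j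
  have hc1 := fourier_coeff n hn ord b1 (ord' l) (c1 l) (A l) (hvec1 l) j
  rw [if_pos hl] at hc0 hc1
  have hrepr : ![c0 l, c1 l] =
      ∑ m ∈ Finset.univ.filter (fun m => ord m = j), A l m • ![b0 m, b1 m] := by
    funext i
    rw [Finset.sum_apply]
    fin_cases i
    · simpa using hc0.symm
    · simpa using hc1.symm
  show ![c0 l, c1 l] ∈ _
  rw [hrepr]
  refine Submodule.sum_smul_mem _ _ fun m hm => ?_
  exact Submodule.subset_span ⟨m, by simpa using (Finset.mem_filter.mp hm).2, rfl⟩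

lemma card_eq_finrank (n : ℕ) (ord : Fin n → Fin n) (b0 b1 : Fin n → ℂ) (j : Fin n)
    (h : LinearIndependent ℂ (fun m : {m : Fin n // ord m = j} => ![b0 m.1, b1 m.1])) :
    (Finset.univ.filter (fun m => ord m = j)).card =
      Module.finrank ℂ
        (Submodule.span ℂ ((fun m => ![b0 m, b1 m]) '' {m : Fin n | ord m = j})) := by
  have h1 := finrank_span_eq_card h
  have h2 : ((fun m => ![b0 m, b1 m]) '' {m : Fin n | ord m = j})
      = Set.range (fun m : {m : Fin n // ord m = j} => ![b0 m.1, b1 m.1]) := by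
    rw [Set.image_eq_range]
    rfl
  rw [h2, h1, Fintype.card_subtype]

/-- **T. Mizrova's theorem:** the limit `𝚯_q(b⁰,b¹)⁻¹ ⬝ 𝚯_q(b¹,b⁰) ⬝ D` of the
characteristic matrix of a Birkhoff-regular problem determines its essential part:
two Birkhoff-regular normalized boundary data with the same limit have fibers of
equal cardinality and equal spans `span{(b⁰_m,b¹_m) : ord m = j}` for each order `j`. -/
theorem mizrova_characteristic_limit_determines_essential_part
    (n : ℕ) (hn : 2 ≤ n)
    (ord ord' : Fin n → Fin n) (b0 b1 c0 c1 : Fin n → ℂ)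
    (hb : NormalizedBC n ord b0 b1) (hc : NormalizedBC n ord' c0 c1)
    (hbreg : IsUnit (ThetaMat n ord b0 b1 (n / 2)))
    (hcreg : IsUnit (ThetaMat n ord' c0 c1 (n / 2)))
    (heq : (ThetaMat n ord b0 b1 (n / 2))⁻¹ * ThetaMat n ord b1 b0 (n / 2) * Dmat n (n / 2) =
           (ThetaMat n ord' c0 c1 (n / 2))⁻¹ * ThetaMat n ord' c1 c0 (n / 2) * Dmat n (n / 2)) :
    ∀ j : Fin n,
      (Finset.univ.filter (fun m => ord m = j)).card =
        (Finset.univ.filter (fun m => ord' m = j)).card ∧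
      Submodule.span ℂ ((fun m => ![b0 m, b1 m]) '' {m : Fin n | ord m = j}) =
        Submodule.span ℂ ((fun m => ![c0 m, c1 m]) '' {m : Fin n | ord' m = j}) := by
  have hn0 : 0 < n := by omega
  -- D is invertible
  have hD : IsUnit (Dmat n (n / 2)).det := by
    rw [Dmat, Matrix.det_diagonal, isUnit_iff_ne_zero]
    refine Finset.prod_ne_zero_iff.mpr fun k _ => ?_
    have hpi : (2 * (Real.pi : ℂ)) ≠ 0 := by
      simp [Real.pi_ne_zero, Complex.ofReal_ne_zero]
    by_cases hk : (k : ℕ) < n / 2 <;>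
      simp [hk, div_eq_zero_iff, eps_ne_zero, hpi]
  -- cancel D
  have heq' : (ThetaMat n ord b0 b1 (n / 2))⁻¹ * ThetaMat n ord b1 b0 (n / 2) =
      (ThetaMat n ord' c0 c1 (n / 2))⁻¹ * ThetaMat n ord' c1 c0 (n / 2) := by
    have h1 := congrArg (fun X => X * (Dmat n (n / 2))⁻¹) heq
    simpa [mul_assoc, Matrix.mul_nonsing_inv _ hD] using h1
  set Tb := ThetaMat n ord b0 b1 (n / 2)
  set Tb' := ThetaMat n ord b1 b0 (n / 2)
  set Tc := ThetaMat n ord' c0 c1 (n / 2)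
  set Tc' := ThetaMat n ord' c1 c0 (n / 2)
  have hbdet : IsUnit Tb.det := (Matrix.isUnit_iff_isUnit_det _).mp hbreg
  have hcdet : IsUnit Tc.det := (Matrix.isUnit_iff_isUnit_det _).mp hcreg
  have hA0 : (Tc * Tb⁻¹) * Tb = Tc := by
    rw [mul_assoc, Matrix.nonsing_inv_mul _ hbdet, mul_one]
  have hA1 : (Tc * Tb⁻¹) * Tb' = Tc' := by
    rw [mul_assoc, heq', ← mul_assoc, Matrix.mul_nonsing_inv _ hcdet, one_mul]
  have hB0 : (Tb * Tc⁻¹) * Tc = Tb := by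
    rw [mul_assoc, Matrix.nonsing_inv_mul _ hcdet, mul_one]
  have hB1 : (Tb * Tc⁻¹) * Tc' = Tb' := by
    rw [mul_assoc, ← heq', ← mul_assoc, Matrix.mul_nonsing_inv _ hbdet, one_mul]
  intro j
  have hle1 := key_span_le n hn0 ord ord' b0 b1 c0 c1 (Tc * Tb⁻¹) hA0 hA1 j
  have hle2 := key_span_le n hn0 ord' ord c0 c1 b0 b1 (Tb * Tc⁻¹) hB0 hB1 j
  have hspan : Submodule.span ℂ ((fun m => ![b0 m, b1 m]) '' {m : Fin n | ord m = j}) =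
      Submodule.span ℂ ((fun m => ![c0 m, c1 m]) '' {m : Fin n | ord' m = j}) :=
    le_antisymm hle2 hle1
  refine ⟨?_, hspan⟩
  rw [card_eq_finrank n ord b0 b1 j (hb j).2, card_eq_finrank n ord' c0 c1 j (hc j).2, hspan]
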